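/- Let Ω ⊆ ℝ² be a bounded domain, let 0 ≤ t₁ < t₂ ≤ 1, and for i = 1, 2 let u_{t_i} ∈ C²(Ω) ∩ C⁰(closure Ω) satisfy (1+|Du|²)Δu − Σ_{i,j} u_i u_j u_{i;j} − t_i(1+|Du|²) = 0 in Ω. If u_{t₁} = u_{t₂} on ∂Ω, then u_{t₂} < u_{t₁} in Ω. -/

import Mathlib

/-!
Suppose `u₂ ≥ u₁` somewhere in `Ω`. Since `u₁ - u₂` vanishes on `∂Ω`, it attains a nonpositive
minimum at an interior point `p`, where `Du₁ = Du₂` and `D²(u₁ - u₂) ≥ 0`. The coefficient matrix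
`(1 + |Du|²) I - Du ⊗ Du` of the principal part is positive definite, so the principal part of
`Q` at `p` is at least as large for `u₁` as for `u₂`. But subtracting the two equations shows that
this difference equals `(t₁ - t₂)(1 + |Du|²) < 0`.
-/

open Real Set Filter

/-- First partial derivative of `u` with respect to `x`. -/
noncomputable def pdx (u : ℝ × ℝ → ℝ) (p : ℝ × ℝ) : ℝ := fderiv ℝ u p ((1, 0) : ℝ × ℝ)

/-- First partial derivative of `u` with respect to `y`. -/
noncomputable def pdy (u : ℝ × ℝ → ℝ) (p : ℝ × ℝ) : ℝ := fderiv ℝ u p ((0, 1) : ℝ × ℝ)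

/-- `|Du|²`, the squared norm of the gradient of `u`. -/
noncomputable def gradSq (u : ℝ × ℝ → ℝ) (p : ℝ × ℝ) : ℝ := (pdx u p) ^ 2 + (pdy u p) ^ 2

/-- `√(1+|Du|²)`. -/
noncomputable def Wg (u : ℝ × ℝ → ℝ) (p : ℝ × ℝ) : ℝ := Real.sqrt (1 + gradSq u p)

/-- `div (Du / √(1+|Du|²))`. -/
noncomputable def divW (u : ℝ × ℝ → ℝ) (p : ℝ × ℝ) : ℝ :=
  pdx (fun q => pdx u q / Wg u q) p + pdy (fun q => pdy u q / Wg u q) p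

/-- The operator `Q_t[u] = (1+|Du|²)Δu − Σ_{i,j} u_i u_j u_{i;j} − t(1+|Du|²)`. -/
noncomputable def Qtop (t : ℝ) (u : ℝ × ℝ → ℝ) (p : ℝ × ℝ) : ℝ :=
  (1 + gradSq u p) * (pdx (pdx u) p + pdy (pdy u) p)
    - ((pdx u p) ^ 2 * pdx (pdx u) p + pdx u p * pdy u p * pdy (pdx u) p
        + pdy u p * pdx u p * pdx (pdy u) p + (pdy u p) ^ 2 * pdy (pdy u) p)
    - t * (1 + gradSq u p)

open Topology

theorem IsLocalMin.deriv_deriv_nonneg {g : ℝ → ℝ} {x₀ : ℝ} (hmin : IsLocalMin g x₀)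
    (hc : ContinuousAt g x₀) : 0 ≤ deriv (deriv g) x₀ := by
  by_contra! hneg
  -- A negative second derivative would make `x₀` also a local maximum, so `g` would be locally
  -- constant.
  have hmax : IsLocalMax g x₀ := isLocalMax_of_deriv_deriv_neg hneg hmin.deriv_eq_zero hc
  have hconst : ∀ᶠ x in 𝓝 x₀, g x = g x₀ := by
    filter_upwards [hmin, hmax] with x h₁ h₂ using le_antisymm h₂ h₁
  have hderiv : deriv g =ᶠ[𝓝 x₀] fun _ => 0 := by
    filter_upwards [eventually_eventually_nhds.2 hconst] with x hx
    have hx : g =ᶠ[𝓝 x] fun _ => g x₀ := hx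
    simpa using hx.deriv_eq
  rw [hderiv.deriv_eq, deriv_const] at hneg
  exact lt_irrefl 0 hneg

section SecondDerivative

variable {E : Type*} [NormedAddCommGroup E] [NormedSpace ℝ E]

theorem ContDiffAt.differentiableAt_fderiv_apply {f : E → ℝ} {p : E} (hf : ContDiffAt ℝ 2 f p)
    (v : E) : DifferentiableAt ℝ (fun q => fderiv ℝ f q v) p :=
  ((hf.fderiv_right (m := 1) (by norm_num)).clm_apply contDiffAt_const).differentiableAt
    one_ne_zero

theorem IsLocalMin.fderiv_fderiv_apply_nonneg {f : E → ℝ} {p : E} (hmin : IsLocalMin f p)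
    (hf : ContDiffAt ℝ 2 f p) (v : E) : 0 ≤ fderiv ℝ (fun q => fderiv ℝ f q v) p v := by
  set c : ℝ → E := fun s => p + s • v
  have hc : ∀ s, HasDerivAt c v s := fun s =>
    (((hasDerivAt_id s).smul_const v).const_add p).congr_deriv (one_smul ℝ v)
  have hc0 : c 0 = p := by simp [c]
  have hcp : Tendsto c (𝓝 0) (𝓝 p) := hc0 ▸ (hc 0).continuousAt.tendsto
  have hdiff : ∀ᶠ q in 𝓝 p, DifferentiableAt ℝ f q :=
    (hf.eventually (by simp)).mono fun q hq => hq.differentiableAt two_ne_zero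
  have hderiv : deriv (f ∘ c) =ᶠ[𝓝 0] fun s => fderiv ℝ f (c s) v := by
    filter_upwards [hcp.eventually hdiff] with s hs
    exact (hs.hasFDerivAt.comp_hasDerivAt s (hc s)).deriv
  have hderiv2 : deriv (deriv (f ∘ c)) 0 = fderiv ℝ (fun q => fderiv ℝ f q v) p v := by
    have hφ := (hf.differentiableAt_fderiv_apply v).hasFDerivAt
    rw [← hc0] at hφ ⊢
    rw [hderiv.deriv_eq]
    exact (hφ.comp_hasDerivAt 0 (hc 0)).deriv
  rw [← hderiv2]
  have hmin' : IsLocalMin (f ∘ c) 0 := by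
    rw [← hc0] at hmin
    exact hmin.comp_continuous (hc 0).continuousAt
  exact hmin'.deriv_deriv_nonneg (hf.continuousAt.comp_of_eq (hc 0).continuousAt hc0)

theorem fderiv_fderiv_sub_apply {u₁ u₂ : E → ℝ} {p : E} (h₁ : ContDiffAt ℝ 2 u₁ p)
    (h₂ : ContDiffAt ℝ 2 u₂ p) (v z : E) :
    fderiv ℝ (fun q => fderiv ℝ (fun r => u₁ r - u₂ r) q v) p z
      = fderiv ℝ (fun q => fderiv ℝ u₁ q v) p z - fderiv ℝ (fun q => fderiv ℝ u₂ q v) p z := by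
  have hsub : (fun q => fderiv ℝ (fun r => u₁ r - u₂ r) q v)
      =ᶠ[𝓝 p] fun q => fderiv ℝ u₁ q v - fderiv ℝ u₂ q v := by
    filter_upwards [h₁.eventually (by simp), h₂.eventually (by simp)] with q hq₁ hq₂
    rw [fderiv_fun_sub (hq₁.differentiableAt two_ne_zero) (hq₂.differentiableAt two_ne_zero)]
    rfl
  rw [hsub.fderiv_eq, fderiv_fun_sub (h₁.differentiableAt_fderiv_apply v)
    (h₂.differentiableAt_fderiv_apply v)]
  rfl

end SecondDerivative

theorem fderiv_apply_eq_pdx_pdy (g : ℝ × ℝ → ℝ) (p v : ℝ × ℝ) :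
    fderiv ℝ g p v = v.1 * pdx g p + v.2 * pdy g p := by
  conv_lhs => rw [show v = v.1 • ((1, 0) : ℝ × ℝ) + v.2 • ((0, 1) : ℝ × ℝ) by simp]
  simp only [map_add, map_smul, smul_eq_mul, pdx, pdy]

theorem fderiv_fderiv_apply_eq_pdx_pdy {g : ℝ × ℝ → ℝ} {p : ℝ × ℝ} (hg : ContDiffAt ℝ 2 g p)
    (v : ℝ × ℝ) :
    fderiv ℝ (fun q => fderiv ℝ g q v) p v
      = v.1 ^ 2 * pdx (pdx g) p + v.1 * v.2 * (pdy (pdx g) p + pdx (pdy g) p)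
        + v.2 ^ 2 * pdy (pdy g) p := by
  have hx : DifferentiableAt ℝ (pdx g) p := hg.differentiableAt_fderiv_apply _
  have hy : DifferentiableAt ℝ (pdy g) p := hg.differentiableAt_fderiv_apply _
  have hfun : (fun q => fderiv ℝ g q v) = fun q => v.1 * pdx g q + v.2 * pdy g q :=
    funext fun q => fderiv_apply_eq_pdx_pdy g q v
  rw [hfun, fderiv_fun_add (hx.const_mul _) (hy.const_mul _), fderiv_const_mul hx,
    fderiv_const_mul hy]
  simp only [add_apply, smul_apply, smul_eq_mul,
    fderiv_apply_eq_pdx_pdy (pdx g), fderiv_apply_eq_pdx_pdy (pdy g)]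
  ring

theorem IsLocalMin.hessian_sub_nonneg {u₁ u₂ : ℝ × ℝ → ℝ} {p : ℝ × ℝ}
    (hmin : IsLocalMin (fun q => u₁ q - u₂ q) p) (h₁ : ContDiffAt ℝ 2 u₁ p)
    (h₂ : ContDiffAt ℝ 2 u₂ p) (x y : ℝ) :
    0 ≤ x ^ 2 * (pdx (pdx u₁) p - pdx (pdx u₂) p)
      + x * y * (pdy (pdx u₁) p - pdy (pdx u₂) p + (pdx (pdy u₁) p - pdx (pdy u₂) p))
      + y ^ 2 * (pdy (pdy u₁) p - pdy (pdy u₂) p) := by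
  have h := hmin.fderiv_fderiv_apply_nonneg (h₁.sub h₂) (x, y)
  rw [fderiv_fderiv_sub_apply h₁ h₂, fderiv_fderiv_apply_eq_pdx_pdy h₁,
    fderiv_fderiv_apply_eq_pdx_pdy h₂] at h
  linarith

theorem ellipticity_of_quadForm_nonneg {P Q a b₁ b₂ c : ℝ}
    (h : ∀ x y : ℝ, 0 ≤ x ^ 2 * a + x * y * (b₁ + b₂) + y ^ 2 * c) :
    P ^ 2 * a + P * Q * b₁ + Q * P * b₂ + Q ^ 2 * c ≤ (1 + (P ^ 2 + Q ^ 2)) * (a + c) := by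
  -- The gap is the sum of the form's values at `(1, 0)`, `(0, 1)` and `(Q, -P)`.
  nlinarith [h 1 0, h 0 1, h Q (-P)]

theorem exists_isMinOn_of_le_on_frontier {E : Type*} [PseudoMetricSpace E] [ProperSpace E]
    {Ω : Set E} {w : E → ℝ} {p₀ : E} (hΩ : Bornology.IsBounded Ω)
    (hw : ContinuousOn w (closure Ω)) (hp₀ : p₀ ∈ Ω) (hfr : ∀ q ∈ frontier Ω, w p₀ ≤ w q) :
    ∃ p ∈ Ω, IsMinOn w Ω p := by
  obtain ⟨q, hq, hqmin⟩ := hΩ.isCompact_closure.exists_isMinOn ⟨p₀, subset_closure hp₀⟩ hw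
  by_cases hqΩ : q ∈ Ω
  · exact ⟨q, hqΩ, hqmin.on_subset subset_closure⟩
  · have hq_fr : q ∈ frontier Ω := ⟨hq, fun h => hqΩ (interior_subset h)⟩
    exact ⟨p₀, hp₀, fun x hx => (hfr q hq_fr).trans (hqmin (subset_closure hx))⟩

theorem Qt_solutions_ordered_general (Ω : Set (ℝ × ℝ)) (hΩo : IsOpen Ω)
    (hΩb : Bornology.IsBounded Ω) (t₁ t₂ : ℝ) (ht : t₁ < t₂)
    (u₁ u₂ : ℝ × ℝ → ℝ)
    (hu₁2 : ContDiffOn ℝ 2 u₁ Ω) (hu₁0 : ContinuousOn u₁ (closure Ω))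
    (hu₂2 : ContDiffOn ℝ 2 u₂ Ω) (hu₂0 : ContinuousOn u₂ (closure Ω))
    (hQ₁ : ∀ p ∈ Ω, Qtop t₁ u₁ p = 0) (hQ₂ : ∀ p ∈ Ω, Qtop t₂ u₂ p = 0)
    (hbd : ∀ p ∈ frontier Ω, u₁ p = u₂ p) :
    ∀ p ∈ Ω, u₂ p < u₁ p := by
  intro p₀ hp₀
  by_contra! hle
  obtain ⟨p, hp, hmin⟩ := exists_isMinOn_of_le_on_frontier (w := fun q => u₁ q - u₂ q) hΩb
    (hu₁0.sub hu₂0) hp₀ fun q hq => by simp only [hbd q hq, sub_self]; linarith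
  have hlocmin := hmin.isLocalMin (hΩo.mem_nhds hp)
  have h₁ := hu₁2.contDiffAt (hΩo.mem_nhds hp)
  have h₂ := hu₂2.contDiffAt (hΩo.mem_nhds hp)
  have hgrad : fderiv ℝ u₂ p = fderiv ℝ u₁ p := by
    have h := hlocmin.fderiv_eq_zero
    rw [fderiv_fun_sub (h₁.differentiableAt two_ne_zero) (h₂.differentiableAt two_ne_zero)] at h
    exact (sub_eq_zero.1 h).symm
  have hx : pdx u₂ p = pdx u₁ p := by simp only [pdx, hgrad]
  have hy : pdy u₂ p = pdy u₁ p := by simp only [pdy, hgrad]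
  have hell := ellipticity_of_quadForm_nonneg (P := pdx u₁ p) (Q := pdy u₁ p)
    (hlocmin.hessian_sub_nonneg h₁ h₂)
  have hpos : 0 < (t₂ - t₁) * (1 + gradSq u₁ p) :=
    mul_pos (sub_pos.2 ht) (by unfold gradSq; positivity)
  have e₁ := hQ₁ p hp
  have e₂ := hQ₂ p hp
  unfold Qtop at e₁ e₂
  unfold gradSq at e₁ e₂ hpos
  rw [hx, hy] at e₂
  linarith

/-- Solutions of `Q_t[u] = 0` with the same boundary values are strictly ordered in a
decreasing way with respect to `t`. -/
theorem Qt_solutions_ordered (Ω : Set (ℝ × ℝ)) (hΩo : IsOpen Ω) (hΩc : IsConnected Ω)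
    (hΩb : Bornology.IsBounded Ω) (t₁ t₂ : ℝ) (ht₀ : 0 ≤ t₁) (ht : t₁ < t₂) (ht₁ : t₂ ≤ 1)
    (u₁ u₂ : ℝ × ℝ → ℝ)
    (hu₁2 : ContDiffOn ℝ 2 u₁ Ω) (hu₁0 : ContinuousOn u₁ (closure Ω))
    (hu₂2 : ContDiffOn ℝ 2 u₂ Ω) (hu₂0 : ContinuousOn u₂ (closure Ω))
    (hQ₁ : ∀ p ∈ Ω, Qtop t₁ u₁ p = 0) (hQ₂ : ∀ p ∈ Ω, Qtop t₂ u₂ p = 0)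
    (hbd : ∀ p ∈ frontier Ω, u₁ p = u₂ p) :
    ∀ p ∈ Ω, u₂ p < u₁ p :=
  Qt_solutions_ordered_general Ω hΩo hΩb t₁ t₂ ht u₁ u₂ hu₁2 hu₁0 hu₂2 hu₂0 hQ₁ hQ₂ hbd
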